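/- Let $0 < y_1$, $y_2 > 0$, $h = \sqrt{y_1+y_2-y_1y_2} > 0$, and suppose $y_1 \neq 1$, $y_2 \neq 1$. With $\alpha = y_1/y_2$, define the density $f(x) = \frac{(\alpha+1)\sqrt{(x_r-x)(x-x_l)}}{2\pi y_1 x(1-x)}$ on $(x_l, x_r)$, where $x_l = \frac{y_2(h-y_1)^2}{(y_1+y_2)^2}$ and $x_r = \frac{y_2(h+y_1)^2}{(y_1+y_2)^2}$. Then in the case $y_1 < 1$ and $y_2 < 1$, $\int_{x_l}^{x_r} f(x)\, dx = 1$, i.e., $F_{y_1,y_2}$ is a probability distribution with no point masses. -/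

import Mathlib

open Real Set intervalIntegral

lemma semicircle_int_right (m r c : ℝ) (hr : 0 < r) (hc : m + r < c) :
    ∫ x in (m - r)..(m + r), Real.sqrt (r ^ 2 - (x - m) ^ 2) / (c - x) =
      π * (c - m) - π * Real.sqrt ((c - m) ^ 2 - r ^ 2) := by
  set d : ℝ := c - m with hd
  have hdr : r < d := by simp only [hd]; linarith
  have hd0 : 0 < d := lt_trans hr hdr
  have hs2 : 0 < d ^ 2 - r ^ 2 := by nlinarith
  set s : ℝ := Real.sqrt (d ^ 2 - r ^ 2) with hsd
  have hs0 : 0 < s := Real.sqrt_pos.2 hs2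
  have hss : s ^ 2 = d ^ 2 - r ^ 2 := Real.sq_sqrt hs2.le
  set F : ℝ → ℝ := fun x => -Real.sqrt (r ^ 2 - (x - m) ^ 2) + d * Real.arcsin ((x - m) / r)
      - s * Real.arcsin ((d * (x - m) - r ^ 2) / (r * (c - x))) with hF
  have hab : m - r ≤ m + r := by linarith
  have hcx : ∀ x ∈ Icc (m - r) (m + r), c - x ≠ 0 := fun x hx => by
    have := hx.2; intro h0; linarith
  have hcont : ContinuousOn F (Icc (m - r) (m + r)) := by
    have h1 : Continuous fun x : ℝ => Real.sqrt (r ^ 2 - (x - m) ^ 2) :=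
      Real.continuous_sqrt.comp (by continuity)
    have h2 : Continuous fun x : ℝ => Real.arcsin ((x - m) / r) :=
      Real.continuous_arcsin.comp (by continuity)
    have h3 : ContinuousOn (fun x : ℝ => (d * (x - m) - r ^ 2) / (r * (c - x)))
        (Icc (m - r) (m + r)) := by
      apply ContinuousOn.div (by fun_prop) (by fun_prop)
      intro x hx
      have := hcx x hx
      intro h0
      rcases mul_eq_zero.1 h0 with h | h
      · exact hr.ne' h
      · exact this h
    exact ((h1.continuousOn.neg.add (continuousOn_const.mul h2.continuousOn))).sub
      (continuousOn_const.mul (Real.continuous_arcsin.comp_continuousOn h3))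
  have hderiv : ∀ x ∈ Ioo (m - r) (m + r),
      HasDerivAt F (Real.sqrt (r ^ 2 - (x - m) ^ 2) / (c - x)) x := by
    intro x hx
    have hR : 0 < r ^ 2 - (x - m) ^ 2 := by nlinarith [hx.1, hx.2]
    set R : ℝ := r ^ 2 - (x - m) ^ 2 with hRdef
    have hsqR : 0 < Real.sqrt R := Real.sqrt_pos.2 hR
    have hRsq : Real.sqrt R ^ 2 = R := Real.sq_sqrt hR.le
    have hcx' : 0 < c - x := by linarith [hx.2]
    -- piece 1 : -√R
    have hR' : HasDerivAt (fun x : ℝ => r ^ 2 - (x - m) ^ 2) (-(2 * (x - m))) x := by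
      have : HasDerivAt (fun x : ℝ => x - m) 1 x := (hasDerivAt_id x).sub_const m
      simpa using (this.pow 2).const_sub (r ^ 2)
    have h1 : HasDerivAt (fun x : ℝ => -Real.sqrt (r ^ 2 - (x - m) ^ 2))
        (-((-(2 * (x - m))) / (2 * Real.sqrt R))) x := (hR'.sqrt hR.ne').neg
    -- piece 2 : d * arcsin ((x-m)/r)
    have hu : |(x - m) / r| < 1 := by
      rw [abs_div, abs_of_pos hr, div_lt_one hr]
      rw [abs_lt]; constructor <;> [linarith [hx.1]; linarith [hx.2]]
    have hu1 : (x - m) / r ≠ -1 := by intro h; rw [h] at hu; simp at hu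
    have hu2 : (x - m) / r ≠ 1 := by intro h; rw [h] at hu; simp at hu
    have hinner : HasDerivAt (fun x : ℝ => (x - m) / r) (1 / r) x := by
      simpa [div_eq_mul_inv] using ((hasDerivAt_id x).sub_const m).div_const r
    have h2 : HasDerivAt (fun x : ℝ => d * Real.arcsin ((x - m) / r))
        (d * (1 / Real.sqrt (1 - ((x - m) / r) ^ 2) * (1 / r))) x :=
      (((Real.hasDerivAt_arcsin hu1 hu2).comp (h := fun x : ℝ => (x - m) / r) x hinner)).const_mul d
    -- piece 3 : s * arcsin w
    set w : ℝ := (d * (x - m) - r ^ 2) / (r * (c - x)) with hwdef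
    have hden : r * (c - x) ≠ 0 := by positivity
    have hw2 : 1 - w ^ 2 = s ^ 2 * R / (r * (c - x)) ^ 2 := by
      rw [hwdef]
      field_simp
      rw [hss]; ring
    have hw2pos : 0 < 1 - w ^ 2 := by
      rw [hw2]; positivity
    have hwa : |w| < 1 := by nlinarith [abs_nonneg w, sq_abs w]
    have hw1 : w ≠ -1 := by intro h; rw [h] at hwa; simp at hwa
    have hw1' : w ≠ 1 := by intro h; rw [h] at hwa; simp at hwa
    have hnum : HasDerivAt (fun x : ℝ => d * (x - m) - r ^ 2) d x := by
      have : HasDerivAt (fun x : ℝ => x - m) 1 x := (hasDerivAt_id x).sub_const m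
      simpa using (this.const_mul d).sub_const (r ^ 2)
    have hdenD : HasDerivAt (fun x : ℝ => r * (c - x)) (-r) x := by
      have : HasDerivAt (fun x : ℝ => c - x) (-1) x := (hasDerivAt_id x).const_sub c
      simpa using this.const_mul r
    have hwD : HasDerivAt (fun x : ℝ => (d * (x - m) - r ^ 2) / (r * (c - x)))
        (s ^ 2 / (r * (c - x) ^ 2)) x := by
      have := hnum.div hdenD hden
      refine this.congr_deriv ?_; symm
      rw [hss]
      field_simp
      ring
    have h3 : HasDerivAt (fun x : ℝ => s * Real.arcsin ((d * (x - m) - r ^ 2) / (r * (c - x))))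
        (s * (1 / Real.sqrt (1 - w ^ 2) * (s ^ 2 / (r * (c - x) ^ 2)))) x :=
      (((Real.hasDerivAt_arcsin hw1 hw1').comp (h := fun x : ℝ => (d * (x - m) - r ^ 2) / (r * (c - x))) x hwD)).const_mul s
    have hcomb := (h1.add h2).sub h3
    refine hcomb.congr_deriv ?_; symm
    have e1 : Real.sqrt (1 - ((x - m) / r) ^ 2) = Real.sqrt R / r := by
      have hsq : (Real.sqrt R / r) ^ 2 = R / r ^ 2 := by rw [div_pow, hRsq]
      have h12 : 1 - ((x - m) / r) ^ 2 = R / r ^ 2 := by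
        rw [hRdef]; field_simp
      rw [h12, ← hsq, Real.sqrt_sq (by positivity)]
    have e2 : Real.sqrt (1 - w ^ 2) = s * Real.sqrt R / (r * (c - x)) := by
      have hsq : (s * Real.sqrt R / (r * (c - x))) ^ 2 = s ^ 2 * R / (r * (c - x)) ^ 2 := by
        rw [div_pow, mul_pow, hRsq]
      rw [hw2, ← hsq, Real.sqrt_sq (by positivity)]
    rw [e1, e2]
    have t1 : -(-(2 * (x - m)) / (2 * Real.sqrt R)) = (x - m) / Real.sqrt R := by
      field_simp
    have t2 : d * (1 / (Real.sqrt R / r) * (1 / r)) = d / Real.sqrt R := by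
      rw [one_div_div]; field_simp
    have t3 : s * (1 / (s * Real.sqrt R / (r * (c - x))) * (s ^ 2 / (r * (c - x) ^ 2)))
        = s ^ 2 / ((c - x) * Real.sqrt R) := by
      rw [one_div_div]; field_simp
    have key : (x - m + d) * (c - x) - s ^ 2 = R := by
      rw [hss, hd, hRdef]; ring
    rw [t1, t2, t3, ← add_div,
      div_sub_div _ _ hsqR.ne' (by positivity : (c - x) * Real.sqrt R ≠ 0),
      div_eq_div_iff hcx'.ne' (by positivity)]
    linear_combination ((c - x) * Real.sqrt R) * hRsq - ((c - x) * Real.sqrt R) * key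
  have hint : IntervalIntegrable (fun x => Real.sqrt (r ^ 2 - (x - m) ^ 2) / (c - x))
      MeasureTheory.volume (m - r) (m + r) := by
    have hc1 : Continuous fun x : ℝ => Real.sqrt (r ^ 2 - (x - m) ^ 2) :=
      Real.continuous_sqrt.comp
        (continuous_const.sub ((continuous_id.sub continuous_const).pow 2))
    have hcint : ContinuousOn (fun x => Real.sqrt (r ^ 2 - (x - m) ^ 2) / (c - x))
        (Icc (m - r) (m + r)) :=
      hc1.continuousOn.div (by fun_prop) hcx
    apply ContinuousOn.intervalIntegrable
    rwa [Set.uIcc_of_le hab]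
  rw [intervalIntegral.integral_eq_sub_of_hasDeriv_right_of_le hab hcont
    (fun x hx => (hderiv x hx).hasDerivWithinAt) hint]
  have hdr' : (0:ℝ) < d - r := by linarith
  have w1 : (d * r - r ^ 2) / (r * (c - (m + r))) = 1 := by
    have hcd : c - (m + r) = d - r := by rw [hd]; ring
    rw [hcd, div_eq_one_iff_eq (by positivity)]
    ring
  have w2 : (d * -r - r ^ 2) / (r * (c - (m - r))) = -1 := by
    have hcd : c - (m - r) = d + r := by rw [hd]; ring
    rw [hcd, div_eq_iff (by positivity)]
    ring
  simp only [hF]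
  rw [show m + r - m = r by ring, show m - r - m = -r by ring, w1, w2,
    div_self hr.ne', show -r / r = -1 by rw [neg_div, div_self hr.ne'],
    Real.arcsin_one, Real.arcsin_neg_one,
    show r ^ 2 - r ^ 2 = 0 by ring, show r ^ 2 - (-r) ^ 2 = 0 by ring,
    Real.sqrt_zero]
  ring

lemma semicircle_int_left (m r c : ℝ) (hr : 0 < r) (hc : c < m - r) :
    ∫ x in (m - r)..(m + r), Real.sqrt (r ^ 2 - (x - m) ^ 2) / (x - c) =
      π * (m - c) - π * Real.sqrt ((m - c) ^ 2 - r ^ 2) := by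
  have key := semicircle_int_right m r (2 * m - c) hr (by linarith)
  have e : (fun x : ℝ => Real.sqrt (r ^ 2 - (x - m) ^ 2) / (x - c)) =
      fun x : ℝ => Real.sqrt (r ^ 2 - ((2 * m - x) - m) ^ 2) / ((2 * m - c) - (2 * m - x)) := by
    funext x
    rw [show (2 * m - c) - (2 * m - x) = x - c by ring,
      show ((2 * m - x) - m) ^ 2 = (x - m) ^ 2 by ring]
  rw [e, intervalIntegral.integral_comp_sub_left
    (fun y : ℝ => Real.sqrt (r ^ 2 - (y - m) ^ 2) / ((2 * m - c) - y)) (2 * m),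
    show 2 * m - (m + r) = m - r by ring, show 2 * m - (m - r) = m + r by ring, key,
    show 2 * m - c - m = m - c by ring]

/-- In the case `y₁ < 1`, `y₂ < 1`, the density of the limiting spectral
distribution `F_{y₁,y₂}` of the Beta matrix integrates to `1` over its
support `(x_l, x_r)`. -/
theorem beta_density_integrates_to_one (y1 y2 : ℝ)
    (hy1 : 0 < y1) (hy1' : y1 < 1) (hy2 : 0 < y2) (hy2' : y2 < 1)
    (hpos : 0 < y1 + y2 - y1 * y2)
    (h : ℝ) (hhd : h = Real.sqrt (y1 + y2 - y1 * y2))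
    (α : ℝ) (hα : α = y1 / y2)
    (xl xr : ℝ)
    (hxl : xl = y2 * (h - y1) ^ 2 / (y1 + y2) ^ 2)
    (hxr : xr = y2 * (h + y1) ^ 2 / (y1 + y2) ^ 2) :
    ∫ x in xl..xr,
      (α + 1) * Real.sqrt ((xr - x) * (x - xl)) / (2 * π * y1 * x * (1 - x)) =
      1 := by
  have hh2 : h ^ 2 = y1 + y2 - y1 * y2 := by rw [hhd]; exact Real.sq_sqrt hpos.le
  have hh0 : 0 ≤ h := hhd ▸ Real.sqrt_nonneg _
  have hy12 : 0 < y1 + y2 := by linarith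
  have hhy1 : y1 < h := by nlinarith
  have hhy2 : y2 < h := by nlinarith
  have h0 : 0 < h := lt_trans hy1 hhy1
  have hxl0 : 0 < xl := by
    rw [hxl]
    exact div_pos (mul_pos hy2 (pow_pos (by linarith) 2)) (pow_pos hy12 2)
  have hxlr : xl < xr := by
    rw [hxl, hxr, div_lt_div_iff_of_pos_right (pow_pos hy12 2)]
    nlinarith [mul_pos (mul_pos hy2 h0) hy1]
  have e1 : 1 - xr = y1 * (h - y2) ^ 2 / (y1 + y2) ^ 2 := by
    rw [hxr, eq_div_iff (by positivity : ((y1 + y2) ^ 2 : ℝ) ≠ 0)]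
    field_simp
    linear_combination (-(y1 + y2)) * hh2
  have e0 : 1 - xl = y1 * (h + y2) ^ 2 / (y1 + y2) ^ 2 := by
    rw [hxl, eq_div_iff (by positivity : ((y1 + y2) ^ 2 : ℝ) ≠ 0)]
    field_simp
    linear_combination (-(y1 + y2)) * hh2
  have hxr1 : xr < 1 := by
    have : 0 < 1 - xr := by
      rw [e1]
      exact div_pos (mul_pos hy1 (pow_pos (by linarith) 2)) (pow_pos hy12 2)
    linarith
  set mm : ℝ := (xl + xr) / 2 with hmm
  set rr : ℝ := (xr - xl) / 2 with hrr
  have hrr0 : 0 < rr := by rw [hrr]; linarith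
  have hbl : xl = mm - rr := by rw [hmm, hrr]; ring
  have hbr : xr = mm + rr := by rw [hmm, hrr]; ring
  have hπ : (0:ℝ) < π := Real.pi_pos
  have hEq : Set.EqOn
      (fun x => (α + 1) * Real.sqrt ((xr - x) * (x - xl)) / (2 * π * y1 * x * (1 - x)))
      (fun x => (α + 1) / (2 * π * y1) *
        (Real.sqrt (rr ^ 2 - (x - mm) ^ 2) / (x - 0) +
         Real.sqrt (rr ^ 2 - (x - mm) ^ 2) / (1 - x)))
      (Set.uIcc xl xr) := by
    intro x hx
    rw [Set.uIcc_of_le hxlr.le] at hx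
    have hx0 : 0 < x := lt_of_lt_of_le hxl0 hx.1
    have hx1 : x < 1 := lt_of_le_of_lt hx.2 hxr1
    have hsq : (xr - x) * (x - xl) = rr ^ 2 - (x - mm) ^ 2 := by
      rw [hmm, hrr]; ring
    simp only [sub_zero, hsq]
    have hx0' : x ≠ 0 := hx0.ne'
    have hx1' : (1:ℝ) - x ≠ 0 := by intro hc; linarith [sub_eq_zero.1 hc]
    field_simp
    ring
  rw [intervalIntegral.integral_congr hEq, intervalIntegral.integral_const_mul]
  have hcS : Continuous fun x : ℝ => Real.sqrt (rr ^ 2 - (x - mm) ^ 2) :=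
    Real.continuous_sqrt.comp
      (continuous_const.sub ((continuous_id.sub continuous_const).pow 2))
  have hi1 : IntervalIntegrable (fun x => Real.sqrt (rr ^ 2 - (x - mm) ^ 2) / (x - 0))
      MeasureTheory.volume xl xr := by
    apply ContinuousOn.intervalIntegrable
    apply hcS.continuousOn.div (by fun_prop)
    intro x hx
    rw [Set.uIcc_of_le hxlr.le] at hx
    have : 0 < x := lt_of_lt_of_le hxl0 hx.1
    simp only [sub_zero]
    exact this.ne'
  have hi2 : IntervalIntegrable (fun x => Real.sqrt (rr ^ 2 - (x - mm) ^ 2) / (1 - x))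
      MeasureTheory.volume xl xr := by
    apply ContinuousOn.intervalIntegrable
    apply hcS.continuousOn.div (by fun_prop)
    intro x hx
    rw [Set.uIcc_of_le hxlr.le] at hx
    have : x < 1 := lt_of_le_of_lt hx.2 hxr1
    intro h0'; linarith [sub_eq_zero.1 h0']
  rw [intervalIntegral.integral_add hi1 hi2]
  rw [hbl, hbr]
  rw [semicircle_int_left mm rr 0 hrr0 (hbl ▸ hxl0),
    show (fun x => Real.sqrt (rr ^ 2 - (x - mm) ^ 2) / (1 - x)) =
      fun x => Real.sqrt (rr ^ 2 - (x - mm) ^ 2) / ((1:ℝ) - x) from rfl,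
    semicircle_int_right mm rr 1 hrr0 (hbr ▸ hxr1)]
  have s1 : (mm - 0) ^ 2 - rr ^ 2 = (mm - rr) * (mm + rr) := by ring
  have s2 : ((1:ℝ) - mm) ^ 2 - rr ^ 2 = (1 - (mm - rr)) * (1 - (mm + rr)) := by ring
  have v1 : Real.sqrt ((mm - 0) ^ 2 - rr ^ 2) = y2 * (1 - y1) / (y1 + y2) := by
    rw [s1, ← hbl, ← hbr, hxl, hxr,
      show y2 * (h - y1) ^ 2 / (y1 + y2) ^ 2 * (y2 * (h + y1) ^ 2 / (y1 + y2) ^ 2)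
        = (y2 * ((h - y1) * (h + y1)) / (y1 + y2) ^ 2) ^ 2 by ring,
      show (h - y1) * (h + y1) = (1 - y1) * (y1 + y2) by linear_combination hh2,
      show y2 * ((1 - y1) * (y1 + y2)) / (y1 + y2) ^ 2 = y2 * (1 - y1) / (y1 + y2) by
        field_simp]
    exact Real.sqrt_sq (div_nonneg (mul_nonneg hy2.le (by linarith)) hy12.le)
  have v2 : Real.sqrt (((1:ℝ) - mm) ^ 2 - rr ^ 2) = y1 * (1 - y2) / (y1 + y2) := by
    rw [s2, ← hbl, ← hbr, e0, e1,
      show y1 * (h + y2) ^ 2 / (y1 + y2) ^ 2 * (y1 * (h - y2) ^ 2 / (y1 + y2) ^ 2)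
        = (y1 * ((h - y2) * (h + y2)) / (y1 + y2) ^ 2) ^ 2 by ring,
      show (h - y2) * (h + y2) = (1 - y2) * (y1 + y2) by linear_combination hh2,
      show y1 * ((1 - y2) * (y1 + y2)) / (y1 + y2) ^ 2 = y1 * (1 - y2) / (y1 + y2) by
        field_simp]
    exact Real.sqrt_sq (div_nonneg (mul_nonneg hy1.le (by linarith)) hy12.le)
  rw [v1, v2, hα]
  have hmmv : mm = (xl + xr) / 2 := hmm
  field_simp
  ring
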